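/- arXiv:0704.0679 — 8 statements merged into one kernel-verified Lean document; each statement's English description precedes it below -/
import Mathlib

section
/- Let θ ∈ ℂ⁴ and x ∈ ℂ³ with f(x,θ) = 0. Then x is a simultaneous fixed point of the three maps g₁², g₂², g₃² (i.e. g₁²(x) = x, g₂²(x) = x and g₃²(x) = x) if and only if y₁(x,θ) = y₂(x,θ) = y₃(x,θ) = 0, i.e. if and only if x is a singular point of the affine cubic surface S(θ). In other words, the set of simultaneous fixed points of g₁², g₂², g₃² on S(θ) equals the singular locus of S(θ). -/
/-!
Each `gᵢ²` is the composite of two Vieta involutions of `S(θ)`: first `x_j ↦ θ_j - x_j - x_k x_i`,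
then `x_i ↦ θ_i - x_i - x_k x_j`, the other root of `f` viewed as a quadratic in that coordinate.
The first involution fixes `x` exactly when `y_j = 0`, and then the second fixes it exactly when
`y_i = 0`; so `gᵢ²` fixes `x` iff `y_i = y_j = 0`, and the three pairs `{i, j}` cover all indices.
-/

/-- The square `g₁²` of the basic transformation `g₁`, for the cyclic permutation
`(i,j,k) = (1,2,3)`: it fixes the third coordinate. -/
noncomputable def g1sq (θ₁ θ₂ : ℂ) : ℂ × ℂ × ℂ → ℂ × ℂ × ℂ :=
  fun x => (θ₁ - x.1 - x.2.2 * (θ₂ - x.2.1 - x.2.2 * x.1),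
            θ₂ - x.2.1 - x.2.2 * x.1, x.2.2)

/-- The square `g₂²`, for the cyclic permutation `(i,j,k) = (2,3,1)`:
it fixes the first coordinate. -/
noncomputable def g2sq (θ₂ θ₃ : ℂ) : ℂ × ℂ × ℂ → ℂ × ℂ × ℂ :=
  fun x => (x.1, θ₂ - x.2.1 - x.1 * (θ₃ - x.2.2 - x.1 * x.2.1),
            θ₃ - x.2.2 - x.1 * x.2.1)

/-- The square `g₃²`, for the cyclic permutation `(i,j,k) = (3,1,2)`:
it fixes the second coordinate. -/
noncomputable def g3sq (θ₃ θ₁ : ℂ) : ℂ × ℂ × ℂ → ℂ × ℂ × ℂ :=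
  fun x => (θ₁ - x.1 - x.2.1 * x.2.2, x.2.1,
            θ₃ - x.2.2 - x.2.1 * (θ₁ - x.1 - x.2.1 * x.2.2))

theorem vieta_flip_comp_fixed_iff {R : Type*} [CommRing R] (θa θb a b c : R) :
    (θa - a - c * (θb - b - c * a) = a ∧ θb - b - c * a = b) ↔
      (2 * a + b * c - θa = 0 ∧ 2 * b + c * a - θb = 0) := by
  constructor
  · rintro ⟨ha, hb⟩
    have hb' : 2 * b + c * a - θb = 0 := by linear_combination -hb
    exact ⟨by linear_combination -ha + c * hb', hb'⟩
  · rintro ⟨ha, hb⟩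
    exact ⟨by linear_combination -ha + c * hb, by linear_combination -hb⟩

theorem g1sq_fixed_iff (θ₁ θ₂ x₁ x₂ x₃ : ℂ) :
    g1sq θ₁ θ₂ (x₁, x₂, x₃) = (x₁, x₂, x₃) ↔
      (2 * x₁ + x₂ * x₃ - θ₁ = 0 ∧ 2 * x₂ + x₃ * x₁ - θ₂ = 0) := by
  simp only [g1sq, Prod.mk.injEq, and_true]
  exact vieta_flip_comp_fixed_iff θ₁ θ₂ x₁ x₂ x₃

theorem g2sq_fixed_iff (θ₂ θ₃ x₁ x₂ x₃ : ℂ) :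
    g2sq θ₂ θ₃ (x₁, x₂, x₃) = (x₁, x₂, x₃) ↔
      (2 * x₂ + x₃ * x₁ - θ₂ = 0 ∧ 2 * x₃ + x₁ * x₂ - θ₃ = 0) := by
  simp only [g2sq, Prod.mk.injEq, true_and]
  exact vieta_flip_comp_fixed_iff θ₂ θ₃ x₂ x₃ x₁

theorem g3sq_fixed_iff (θ₃ θ₁ x₁ x₂ x₃ : ℂ) :
    g3sq θ₃ θ₁ (x₁, x₂, x₃) = (x₁, x₂, x₃) ↔
      (2 * x₃ + x₁ * x₂ - θ₃ = 0 ∧ 2 * x₁ + x₂ * x₃ - θ₁ = 0) := by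
  simp only [g3sq, Prod.mk.injEq, true_and]
  rw [and_comm]
  exact vieta_flip_comp_fixed_iff θ₃ θ₁ x₃ x₁ x₂

theorem simultaneous_fixed_points_eq_singular_locus_general
    (θ₁ θ₂ θ₃ x₁ x₂ x₃ : ℂ) :
    (g1sq θ₁ θ₂ (x₁, x₂, x₃) = (x₁, x₂, x₃) ∧
     g2sq θ₂ θ₃ (x₁, x₂, x₃) = (x₁, x₂, x₃) ∧
     g3sq θ₃ θ₁ (x₁, x₂, x₃) = (x₁, x₂, x₃)) ↔
    (2 * x₁ + x₂ * x₃ - θ₁ = 0 ∧ 2 * x₂ + x₃ * x₁ - θ₂ = 0 ∧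
     2 * x₃ + x₁ * x₂ - θ₃ = 0) := by
  rw [g1sq_fixed_iff, g2sq_fixed_iff, g3sq_fixed_iff]
  tauto

/-- A point of the affine cubic surface `S(θ)` is a simultaneous fixed point of
`g₁², g₂², g₃²` if and only if it is a singular point of `S(θ)`, i.e. the gradient
`(y₁, y₂, y₃)` of `f(·,θ)` vanishes there. -/
theorem simultaneous_fixed_points_eq_singular_locus
    (θ₁ θ₂ θ₃ θ₄ x₁ x₂ x₃ : ℂ)
    (hf : x₁ * x₂ * x₃ + x₁ ^ 2 + x₂ ^ 2 + x₃ ^ 2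
      - θ₁ * x₁ - θ₂ * x₂ - θ₃ * x₃ + θ₄ = 0) :
    (g1sq θ₁ θ₂ (x₁, x₂, x₃) = (x₁, x₂, x₃) ∧
     g2sq θ₂ θ₃ (x₁, x₂, x₃) = (x₁, x₂, x₃) ∧
     g3sq θ₃ θ₁ (x₁, x₂, x₃) = (x₁, x₂, x₃)) ↔
    (2 * x₁ + x₂ * x₃ - θ₁ = 0 ∧ 2 * x₂ + x₃ * x₁ - θ₂ = 0 ∧
     2 * x₃ + x₁ * x₂ - θ₃ = 0) :=
  simultaneous_fixed_points_eq_singular_locus_general θ₁ θ₂ θ₃ x₁ x₂ x₃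
end

section
/- Let θ ∈ ℂ⁴, let (i,j,k) be a cyclic permutation of (1,2,3) and let x ∈ ℂ³ with f(x,θ) = 0. Then g_j²(x) = x if and only if y_j(x,θ) = 0 and y_k(x,θ) = 0. -/
/-- The square `g_j²` of the basic transformation attached to a cyclic permutation
`(i,j,k)` of `(1,2,3)`, written in the coordinates `(x_i, x_j, x_k)`:
`g_j²(x)_i = x_i`, `g_j²(x)_j = θ_j − x_j − x_i(θ_k − x_k − x_i x_j)`,
`g_j²(x)_k = θ_k − x_k − x_i x_j`. -/
noncomputable def gjsq (θj θk : ℂ) : ℂ × ℂ × ℂ → ℂ × ℂ × ℂ :=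
  fun x => (x.1, θj - x.2.1 - x.1 * (θk - x.2.2 - x.1 * x.2.1),
            θk - x.2.2 - x.1 * x.2.1)

section FixedPoints

variable (θj θk xi xj xk : ℂ)

theorem gjsq_fst : (gjsq θj θk (xi, xj, xk)).1 = xi := rfl

theorem gjsq_snd_snd_eq_iff :
    (gjsq θj θk (xi, xj, xk)).2.2 = xk ↔ 2 * xk + xi * xj - θk = 0 := by
  constructor <;> intro h <;> simp only [gjsq] at * <;> linear_combination -h

/-- Once the `k`-coordinate is fixed, the inner factor `θ_k − x_k − x_i x_j` equals `x_k`,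
so the `j`-coordinate condition becomes linear in `x_j`. -/
theorem gjsq_snd_fst_eq_iff_of_snd_snd_eq (hk : (gjsq θj θk (xi, xj, xk)).2.2 = xk) :
    (gjsq θj θk (xi, xj, xk)).2.1 = xj ↔ 2 * xj + xk * xi - θj = 0 := by
  simp only [gjsq] at hk ⊢
  rw [hk]
  constructor <;> intro h <;> linear_combination -h

end FixedPoints

theorem fixed_point_iff_yj_yk_vanish_general
    (θj θk xi xj xk : ℂ) :
    gjsq θj θk (xi, xj, xk) = (xi, xj, xk) ↔
      (2 * xj + xk * xi - θj = 0 ∧ 2 * xk + xi * xj - θk = 0) := by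
  rw [Prod.ext_iff, Prod.ext_iff, gjsq_fst, ← gjsq_snd_snd_eq_iff θj θk xi xj xk]
  simp only [true_and]
  exact and_congr_left (gjsq_snd_fst_eq_iff_of_snd_snd_eq θj θk xi xj xk)

/-- A point `x` of the cubic surface `S(θ)` (coordinates `(x_i, x_j, x_k)` for a
cyclic permutation `(i,j,k)` of `(1,2,3)`) is a fixed point of `g_j²` if and only if
`y_j(x,θ) = 0` and `y_k(x,θ) = 0`. -/
theorem fixed_point_iff_yj_yk_vanish
    (θi θj θk θ4 xi xj xk : ℂ)
    (hf : xi * xj * xk + xi ^ 2 + xj ^ 2 + xk ^ 2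
      - θi * xi - θj * xj - θk * xk + θ4 = 0) :
    gjsq θj θk (xi, xj, xk) = (xi, xj, xk) ↔
      (2 * xj + xk * xi - θj = 0 ∧ 2 * xk + xi * xj - θk = 0) :=
  fixed_point_iff_yj_yk_vanish_general θj θk xi xj xk
end

section
/- Let θ ∈ ℂ⁴, let (i,j,k) be a cyclic permutation of (1,2,3), let x ∈ ℂ³ with f(x,θ) = 0, and assume x is not a fixed point of g_j², i.e. it is not the case that y_j(x,θ) = 0 and y_k(x,θ) = 0. Let n > 1 be an integer. Then x is a periodic point of g_j² of prime (minimal) period n — that is, the n-fold iterate of g_j² fixes x while no d-fold iterate with 0 < d < n fixes x — if and only if there exists an integer m with 0 < m < n and gcd(m,n) = 1 such that x_i = 2·cos(πm/n). -/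
open Function Complex

section Iterate

variable {α M : Type*} [AddCommMonoid M] {f : α → α} {φ c : α → M}

theorem apply_iterate_eq_add_nsmul (hφ : ∀ w, φ (f w) = φ w + c w) (hc : ∀ w, c (f w) = c w)
    (x : α) (k : ℕ) : φ (f^[k] x) = φ x + k • c x := by
  induction k generalizing x with
  | zero => simp
  | succ k ih => rw [iterate_succ_apply, ih, hφ, hc, succ_nsmul', add_assoc]

theorem eq_zero_of_isPeriodicPt [IsAddTorsionFree M] [IsLeftCancelAdd M]
    (hφ : ∀ w, φ (f w) = φ w + c w) (hc : ∀ w, c (f w) = c w)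
    {n : ℕ} {x : α} (hx : IsPeriodicPt f n x) (hn : n ≠ 0) : c x = 0 := by
  have h := apply_iterate_eq_add_nsmul hφ hc x n
  rw [hx.eq, left_eq_add] at h
  exact (nsmul_eq_zero_iff_right hn).mp h

end Iterate

theorem iterate_eq_self_iff_pow_eq_one {α R : Type*} [CommRing R] [IsDomain R]
    {f : α → α} {Ψ : α → R × R} {l m : R} (hΨ : Injective Ψ)
    (hf : Semiconj Ψ f (Prod.map (l * ·) (m * ·))) (hlm : l * m = 1)
    {x : α} (hx : f x ≠ x) (k : ℕ) : f^[k] x = x ↔ l ^ k = 1 := by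
  obtain ⟨p, q, hpq⟩ : ∃ p q, Ψ x = (p, q) := ⟨_, _, rfl⟩
  have hiter : ∀ k, f^[k] x = x ↔ l ^ k * p = p ∧ m ^ k * q = q := fun k => by
    rw [← hΨ.eq_iff, (hf.iterate_right k).eq, hpq, Prod.map_iterate, mul_left_iterate,
      mul_left_iterate, Prod.map_apply, Prod.mk.injEq]
  have hm : ∀ k, m ^ k = 1 ↔ l ^ k = 1 := fun k => by
    have h : l ^ k * m ^ k = 1 := by rw [← mul_pow, hlm, one_pow]
    constructor <;> intro h' <;> simpa [h'] using h
  have hpq0 : p ≠ 0 ∨ q ≠ 0 := by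
    by_contra! h
    exact hx ((hiter 1).mpr (by simp [h.1, h.2]))
  rw [hiter]
  constructor
  · rintro ⟨hp, hq⟩
    rcases hpq0 with hp0 | hq0
    · exact mul_right_cancel₀ hp0 (hp.trans (one_mul p).symm)
    · exact (hm k).mp (mul_right_cancel₀ hq0 (hq.trans (one_mul q).symm))
  · intro h
    simp [h, (hm k).mpr h]

section FiberMap

variable {K : Type*} [Field K]

/-- On the invariant line `x_i = a`, `gjsq θj θk` acts as `fiberMap a (θj - a * θk) θk`.
Its linear part has determinant `1` and trace `a² - 2`, hence the characteristic polynomial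
`l ^ 2 - (a ^ 2 - 2) * l + 1` appearing below. -/
def fiberMap (a c₁ c₂ : K) : K × K → K × K :=
  fun v => ((a ^ 2 - 1) * v.1 + a * v.2 + c₁, -a * v.1 - v.2 + c₂)

/-- `(l + 1, a)` is a left eigenvector of the linear part of `fiberMap` for an eigenvalue `l`;
the factor `1 - l` lets the constant term absorb the translation without dividing. -/
def fiberEigenform (a c₁ c₂ l : K) (v : K × K) : K :=
  (1 - l) * ((l + 1) * v.1 + a * v.2) - ((l + 1) * c₁ + a * c₂)

theorem semiconj_fiberEigenform {a c₁ c₂ l : K} (hl : l ^ 2 - (a ^ 2 - 2) * l + 1 = 0) :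
    Semiconj (fiberEigenform a c₁ c₂ l) (fiberMap a c₁ c₂) (l * ·) := fun v => by
  simp only [fiberEigenform, fiberMap]
  linear_combination (l - 1) * v.1 * hl

theorem injective_fiberEigenform_pair {a c₁ c₂ l m : K} (ha : a ≠ 0) (hlm : l ≠ m)
    (hl : l ≠ 1) (hm : m ≠ 1) :
    Injective fun v => (fiberEigenform a c₁ c₂ l v, fiberEigenform a c₁ c₂ m v) := by
  intro v w h
  obtain ⟨h₁, h₂⟩ := Prod.ext_iff.mp h
  simp only [fiberEigenform] at h₁ h₂
  have e₁ : (l + 1) * v.1 + a * v.2 = (l + 1) * w.1 + a * w.2 :=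
    mul_left_cancel₀ (sub_ne_zero.mpr hl.symm) (by linear_combination h₁)
  have e₂ : (m + 1) * v.1 + a * v.2 = (m + 1) * w.1 + a * w.2 :=
    mul_left_cancel₀ (sub_ne_zero.mpr hm.symm) (by linear_combination h₂)
  have h₁' : v.1 = w.1 :=
    mul_left_cancel₀ (sub_ne_zero.mpr hlm) (by linear_combination e₁ - e₂)
  exact Prod.ext h₁' (mul_left_cancel₀ ha (by linear_combination e₁ - (l + 1) * h₁'))

theorem fiberMap_iterate_eq_self_iff {a c₁ c₂ l : K} (hl : l ^ 2 - (a ^ 2 - 2) * l + 1 = 0)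
    (hl₁ : l ≠ 1) {v : K × K} (hv : fiberMap a c₁ c₂ v ≠ v) (k : ℕ) :
    (fiberMap a c₁ c₂)^[k] v = v ↔ l ^ k = 1 := by
  by_cases hlneg : l = -1
  · subst hlneg
    obtain rfl : a = 0 := pow_eq_zero_iff two_ne_zero |>.mp (by linear_combination hl)
    have hinv : Involutive (fiberMap 0 c₁ c₂) := fun w => by simp [fiberMap]
    rw [neg_one_pow_eq_one_iff_even hl₁]
    rcases Nat.even_or_odd k with hk | hk
    · simp [hinv.iterate_even hk, hk]
    · simp [hinv.iterate_odd hk, hv, Nat.not_even_iff_odd.mpr hk]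
  · set m := a ^ 2 - 2 - l
    have hm : m ^ 2 - (a ^ 2 - 2) * m + 1 = 0 := by linear_combination hl
    have hlm : l * m = 1 := by linear_combination -hl
    have ha : a ≠ 0 := by
      rintro rfl
      exact hlneg (eq_neg_of_add_eq_zero_left (pow_eq_zero_iff two_ne_zero |>.mp
        (by linear_combination hl)))
    have hm₁ : m ≠ 1 := fun h => hl₁ (by simpa [h] using hlm)
    have hl_ne_m : l ≠ m := by
      intro h
      rw [← h, mul_self_eq_one_iff] at hlm
      exact hlm.elim hl₁ hlneg
    exact iterate_eq_self_iff_pow_eq_one (injective_fiberEigenform_pair ha hl_ne_m hl₁ hm₁)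
      (fun w => Prod.ext (semiconj_fiberEigenform hl w) (semiconj_fiberEigenform hm w)) hlm hv k

theorem fiberMap_iterate_ne_self_of_sq_eq_four [CharZero K] {a c₁ c₂ : K} (ha : a ^ 2 = 4)
    {v : K × K} (hv : fiberMap a c₁ c₂ v ≠ v) {n : ℕ} (hn : n ≠ 0) :
    (fiberMap a c₁ c₂)^[n] v ≠ v := by
  set T := fiberMap a c₁ c₂
  intro hper
  -- The linear part `L` of `T` is unipotent, `(L - 1)² = 0`, so each step shifts the
  -- displacement `T w - w` by the constant `(L - 1) c`; periodicity kills this constant,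
  -- and then the displacement itself.
  have hdisp :
      ∀ w, T (T w) - T w = T w - w + ((a ^ 2 - 2) * c₁ + a * c₂, -a * c₁ - 2 * c₂) :=
    fun w => Prod.ext
      (by simp only [T, fiberMap, Prod.fst_sub, Prod.fst_add]
          linear_combination ((a ^ 2 - 1) * w.1 + a * w.2) * ha)
      (by simp only [T, fiberMap, Prod.snd_sub, Prod.snd_add]
          linear_combination (-a * w.1 - w.2) * ha)
  have hshift : ((a ^ 2 - 2) * c₁ + a * c₂, -a * c₁ - 2 * c₂) = 0 :=
    eq_zero_of_isPeriodicPt (φ := fun w => T w - w) hdisp (fun _ => rfl) hper hn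
  rw [hshift] at hdisp
  exact hv (sub_eq_zero.mp (eq_zero_of_isPeriodicPt (φ := id) (c := fun w => T w - w)
    (fun w => by simp) (fun w => by simpa using hdisp w) hper hn))

theorem fiberMap_exactPeriod_iff [CharZero K] {a c₁ c₂ l : K}
    (hl : l ^ 2 - (a ^ 2 - 2) * l + 1 = 0) {v : K × K} (hv : fiberMap a c₁ c₂ v ≠ v)
    {n : ℕ} (hn : 1 < n) :
    ((fiberMap a c₁ c₂)^[n] v = v ∧ ∀ d : ℕ, 0 < d → d < n → (fiberMap a c₁ c₂)^[d] v ≠ v) ↔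
      IsPrimitiveRoot l n := by
  by_cases hl₁ : l = 1
  · subst hl₁
    have ha : a ^ 2 = 4 := by linear_combination -hl
    refine iff_of_false (fun h => fiberMap_iterate_ne_self_of_sq_eq_four ha hv (by omega) h.1)
      fun h => ?_
    have := h.eq_orderOf
    rw [orderOf_one] at this
    omega
  · rw [IsPrimitiveRoot.iff (by omega)]
    simp only [ne_eq, fiberMap_iterate_eq_self_iff hl hl₁ hv]

end FiberMap

theorem gjsq_iterate_eq_self_iff (θj θk a : ℂ) (w : ℂ × ℂ) (k : ℕ) :
    (gjsq θj θk)^[k] (a, w) = (a, w) ↔ (fiberMap a (θj - a * θk) θk)^[k] w = w := by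
  have hsemi : Semiconj (Prod.mk a) (fiberMap a (θj - a * θk) θk) (gjsq θj θk) := fun w =>
    Prod.ext rfl <| Prod.ext (by simp only [gjsq, fiberMap]; ring)
      (by simp only [gjsq, fiberMap]; ring)
  rw [← (hsemi.iterate_right k).eq, Prod.mk_right_inj]

theorem sq_sub_mul_add_one_eq {K : Type*} [Field K] (l a w : K) (hw : w ≠ 0) :
    l ^ 2 - (a ^ 2 - 2) * l + 1 =
      (l - w ^ 2) * (l - (w ^ 2)⁻¹) + ((w + w⁻¹) ^ 2 - a ^ 2) * l := by
  field_simp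
  ring

theorem two_cos_eq_exp_add_inv (t : ℝ) :
    ((2 * Real.cos t : ℝ) : ℂ) = cexp (t * I) + (cexp (t * I))⁻¹ := by
  rw [← Complex.exp_neg]
  push_cast
  rw [Complex.two_cos, neg_mul]

theorem isPrimitiveRoot_iff_exists_eq_two_cos {a l : ℂ} (hl : l ^ 2 - (a ^ 2 - 2) * l + 1 = 0)
    {n : ℕ} (hn : 1 < n) :
    IsPrimitiveRoot l n ↔ ∃ m : ℕ, 0 < m ∧ m < n ∧ Nat.gcd m n = 1 ∧
      a = ((2 * Real.cos (Real.pi * m / n) : ℝ) : ℂ) := by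
  have hsq : ∀ m : ℕ, cexp (↑(Real.pi * m / n) * I) ^ 2 = cexp (2 * Real.pi * I * (m / n)) :=
    fun m => by rw [← Complex.exp_nat_mul]; push_cast; ring_nf
  constructor
  · rw [Complex.isPrimitiveRoot_iff l n (by omega)]
    rintro ⟨m, hmn, hcop, rfl⟩
    have hm : 0 < m := Nat.pos_of_ne_zero fun h => by subst h; simp at hcop; omega
    set w := cexp (↑(Real.pi * m / n) * I)
    have hw : w ≠ 0 := Complex.exp_ne_zero _
    have ha : a ^ 2 = (w + w⁻¹) ^ 2 := by
      rw [← hsq, sq_sub_mul_add_one_eq _ a w hw, sub_self, zero_mul, zero_add] at hl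
      linear_combination -(mul_eq_zero.mp hl).resolve_right (pow_ne_zero 2 hw)
    rcases sq_eq_sq_iff_eq_or_eq_neg.mp ha with ha | ha
    · exact ⟨m, hm, hmn, hcop, by rw [two_cos_eq_exp_add_inv, ha]⟩
    · refine ⟨n - m, by omega, by omega, (Nat.coprime_self_sub_left hmn.le).mpr hcop, ?_⟩
      rw [Nat.cast_sub hmn.le, show Real.pi * (n - m : ℝ) / n = Real.pi - Real.pi * m / n by
        field_simp, Real.cos_pi_sub, mul_neg, Complex.ofReal_neg, two_cos_eq_exp_add_inv, ha]
  · rintro ⟨m, -, -, hcop, rfl⟩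
    set w := cexp (↑(Real.pi * m / n) * I)
    have hprim : IsPrimitiveRoot (w ^ 2) n := by
      rw [hsq]; exact Complex.isPrimitiveRoot_exp_of_coprime m n (by omega) hcop
    rw [sq_sub_mul_add_one_eq _ _ w (Complex.exp_ne_zero _), two_cos_eq_exp_add_inv, sub_self,
      zero_mul, add_zero, mul_eq_zero, sub_eq_zero, sub_eq_zero] at hl
    rcases hl with rfl | rfl
    exacts [hprim, hprim.inv]

theorem periodic_point_iff_cos_general
    (θj θk xi xj xk : ℂ) (n : ℕ) (hn : 1 < n)
    (hnotfix : ¬(2 * xj + xk * xi - θj = 0 ∧ 2 * xk + xi * xj - θk = 0)) :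
    ((gjsq θj θk)^[n] (xi, xj, xk) = (xi, xj, xk) ∧
      ∀ d : ℕ, 0 < d → d < n → (gjsq θj θk)^[d] (xi, xj, xk) ≠ (xi, xj, xk)) ↔
    (∃ m : ℕ, 0 < m ∧ m < n ∧ Nat.gcd m n = 1 ∧
      xi = ((2 * Real.cos (Real.pi * m / n) : ℝ) : ℂ)) := by
  obtain ⟨s, hs⟩ := IsAlgClosed.exists_eq_mul_self ((xi ^ 2 - 2) ^ 2 - 4)
  have hl : ((xi ^ 2 - 2 + s) / 2) ^ 2 - (xi ^ 2 - 2) * ((xi ^ 2 - 2 + s) / 2) + 1 = 0 := by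
    linear_combination -hs / 4
  have hv : fiberMap xi (θj - xi * θk) θk (xj, xk) ≠ (xj, xk) := by
    intro h
    obtain ⟨h₁, h₂⟩ := Prod.ext_iff.mp h
    simp only [fiberMap] at h₁ h₂
    exact hnotfix ⟨by linear_combination -h₁ - xi * h₂, by linear_combination -h₂⟩
  simp only [ne_eq, gjsq_iterate_eq_self_iff]
  rw [fiberMap_exactPeriod_iff hl hv hn, isPrimitiveRoot_iff_exists_eq_two_cos hl hn]

/-- A non-fixed point `x` of `g_j²` on the cubic surface `S(θ)` is a periodic point of
prime (minimal) period `n > 1` if and only if `x_i = 2 cos(πm/n)` for some `0 < m < n`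
coprime to `n`. -/
theorem periodic_point_iff_cos
    (θi θj θk θ4 xi xj xk : ℂ) (n : ℕ) (hn : 1 < n)
    (hf : xi * xj * xk + xi ^ 2 + xj ^ 2 + xk ^ 2
      - θi * xi - θj * xj - θk * xk + θ4 = 0)
    (hnotfix : ¬(2 * xj + xk * xi - θj = 0 ∧ 2 * xk + xi * xj - θk = 0)) :
    ((gjsq θj θk)^[n] (xi, xj, xk) = (xi, xj, xk) ∧
      ∀ d : ℕ, 0 < d → d < n → (gjsq θj θk)^[d] (xi, xj, xk) ≠ (xi, xj, xk)) ↔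
    (∃ m : ℕ, 0 < m ∧ m < n ∧ Nat.gcd m n = 1 ∧
      xi = ((2 * Real.cos (Real.pi * m / n) : ℝ) : ℂ)) :=
  periodic_point_iff_cos_general θj θk xi xj xk n hn hnotfix
end

section
/- Let (i,j,k) be a cyclic permutation of (1,2,3) and define the map g_j on pairs (x,θ) ∈ ℂ³ × ℂ⁴ by x′_j = θ_k − x_k − x_ix_j, x′_k = x_j, x′_i = x_i, θ′_j = θ_k, θ′_k = θ_j, θ′_i = θ_i, θ′₄ = θ₄. For N ∈ ℕ write (x⁽ᴺ⁾, θ⁽ᴺ⁾) for the N-fold iterate of g_j applied to (x,θ), and y_j⁽ᴺ⁾ = 2x_j⁽ᴺ⁾ + x_k⁽ᴺ⁾·x_i⁽ᴺ⁾ − θ_j⁽ᴺ⁾. Then for every (x,θ) and every N ∈ ℕ the following identities hold: (1) y_j⁽ᴺ⁺²⁾ + x_i·y_j⁽ᴺ⁺¹⁾ + y_j⁽ᴺ⁾ = 0; (2) x_j⁽ᴺ⁺²⁾ − x_j⁽ᴺ⁾ = y_j⁽ᴺ⁺²⁾; (3) x_k⁽ᴺ⁺¹⁾ = x_j⁽ᴺ⁾.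 (Here x_i⁽ᴺ⁾ = x_i for all N.) -/
/-- The basic transformation `g_j` acting on pairs `(x, θ)`, in coordinates
`((x_i, x_j, x_k), (θ_i, θ_j, θ_k, θ₄))`:
`x′_j = θ_k − x_k − x_i x_j`, `x′_k = x_j`, `x′_i = x_i`, and `θ_j, θ_k` are swapped. -/
noncomputable def gj : (ℂ × ℂ × ℂ) × (ℂ × ℂ × ℂ × ℂ) → (ℂ × ℂ × ℂ) × (ℂ × ℂ × ℂ × ℂ) :=
  fun s => ((s.1.1, s.2.2.2.1 - s.1.2.2 - s.1.1 * s.1.2.1, s.1.2.1),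
            (s.2.1, s.2.2.2.1, s.2.2.1, s.2.2.2.2))

/-- `y_j(x,θ) = 2x_j + x_k x_i − θ_j` evaluated at a state `((x_i,x_j,x_k),(θ_i,θ_j,θ_k,θ₄))`. -/
noncomputable def yj (s : (ℂ × ℂ × ℂ) × (ℂ × ℂ × ℂ × ℂ)) : ℂ :=
  2 * s.1.2.1 + s.1.2.2 * s.1.1 - s.2.2.1

/-! Each identity only involves one or two consecutive applications of `g_j`, so it suffices to
check it as a polynomial identity at an arbitrary state and apply it at the `N`-th iterate;
the only information carried along the orbit is that `g_j` never changes `x_i`. -/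

section

variable (s : (ℂ × ℂ × ℂ) × (ℂ × ℂ × ℂ × ℂ))

@[simp]
lemma gj_fst_fst : (gj s).1.1 = s.1.1 := rfl

@[simp]
lemma gj_fst_snd_snd : (gj s).1.2.2 = s.1.2.1 := rfl

lemma iterate_gj_fst_fst (n : ℕ) : (gj^[n] s).1.1 = s.1.1 := by
  induction n with
  | zero => rfl
  | succ n ih => rw [Function.iterate_succ_apply', gj_fst_fst, ih]

lemma yj_gj_gj_add_mul_yj_gj_add_yj_eq_zero : yj (gj (gj s)) + s.1.1 * yj (gj s) + yj s = 0 := by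
  simp only [gj, yj]
  ring

lemma gj_gj_fst_snd_fst_sub_eq_yj : (gj (gj s)).1.2.1 - s.1.2.1 = yj (gj (gj s)) := by
  simp only [gj, yj]
  ring

end

/-- The three recurrence identities for the iterates of `g_j`:
`y_j⁽ᴺ⁺²⁾ + x_i y_j⁽ᴺ⁺¹⁾ + y_j⁽ᴺ⁾ = 0`, `x_j⁽ᴺ⁺²⁾ − x_j⁽ᴺ⁾ = y_j⁽ᴺ⁺²⁾`,
`x_k⁽ᴺ⁺¹⁾ = x_j⁽ᴺ⁾`, and moreover `x_i⁽ᴺ⁾ = x_i` for all `N`. -/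
theorem gj_iterate_recurrences (xi xj xk θi θj θk θ4 : ℂ) (N : ℕ) :
    yj (gj^[N + 2] ((xi, xj, xk), (θi, θj, θk, θ4)))
        + xi * yj (gj^[N + 1] ((xi, xj, xk), (θi, θj, θk, θ4)))
        + yj (gj^[N] ((xi, xj, xk), (θi, θj, θk, θ4))) = 0 ∧
    (gj^[N + 2] ((xi, xj, xk), (θi, θj, θk, θ4))).1.2.1
        - (gj^[N] ((xi, xj, xk), (θi, θj, θk, θ4))).1.2.1
        = yj (gj^[N + 2] ((xi, xj, xk), (θi, θj, θk, θ4))) ∧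
    (gj^[N + 1] ((xi, xj, xk), (θi, θj, θk, θ4))).1.2.2
        = (gj^[N] ((xi, xj, xk), (θi, θj, θk, θ4))).1.2.1 ∧
    (gj^[N] ((xi, xj, xk), (θi, θj, θk, θ4))).1.1 = xi := by
  set s := ((xi, xj, xk), (θi, θj, θk, θ4))
  have hxi : (gj^[N] s).1.1 = xi := iterate_gj_fst_fst s N
  simp only [Function.iterate_succ_apply']
  refine ⟨?_, gj_gj_fst_snd_fst_sub_eq_yj _, gj_fst_snd_snd _, hxi⟩
  simpa only [hxi] using yj_gj_gj_add_mul_yj_gj_add_yj_eq_zero (gj^[N] s)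
end

section
/- Let θ ∈ ℂ⁴, let (i,j,k) be a cyclic permutation of (1,2,3), and let s ∈ ℂ with s² ≠ 4. Define x ∈ ℂ³ by x_i = s, x_j = (2θ_j − sθ_k)/(4 − s²), x_k = (2θ_k − sθ_j)/(4 − s²). Then: (1) y_j(x,θ) = 0 and y_k(x,θ) = 0; (2) x is the unique point of ℂ³ with i-th coordinate s satisfying y_j = y_k = 0, i.e. if x′ ∈ ℂ³ has x′_i = s and y_j(x′,θ) = y_k(x′,θ) = 0 then x′ = x; (3) f(x,θ) = 0 if and only if s is a root of the quartic Q(s) = s⁴ − θ_i s³ + (θ₄−4)s² + (4θ_i − θ_jθ_k)s + θ_j² + θ_k² − 4θ₄. -/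
/-!
For fixed `x_i = s` the equations `y_j = y_k = 0` form the linear system with matrix
`[[2, s], [s, 2]]` of determinant `4 - s²`, solved by Cramer's rule. At a solution `(u, v)`,
`θ_j u = 2u² + suv` and `θ_k v = 2v² + suv`, so `f = s² - θ_i s + θ₄ - (u² + v² + suv)`, while
`(4 - s²)(u² + v² + suv) = θ_j² + θ_k² - sθ_jθ_k`. Hence `(4 - s²) f = -Q(s)`.
-/

section CommRing

variable {R : Type*} [CommRing R] {θi θj θk θ4 s u v : R}

theorem mul_four_sub_sq_of_linear_system (hu : 2 * u + s * v = θj) (hv : 2 * v + s * u = θk) :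
    u * (4 - s ^ 2) = 2 * θj - s * θk := by
  linear_combination 2 * hu - s * hv

theorem critical_value_mul_four_sub_sq (hu : 2 * u + s * v = θj) (hv : 2 * v + s * u = θk) :
    (s * u * v + s ^ 2 + u ^ 2 + v ^ 2 - θi * s - θj * u - θk * v + θ4) * (4 - s ^ 2) =
      -(s ^ 4 - θi * s ^ 3 + (θ4 - 4) * s ^ 2 + (4 * θi - θj * θk) * s
        + θj ^ 2 + θk ^ 2 - 4 * θ4) := by
  linear_combination ((4 - s ^ 2) * u - (2 * u + s * v) - θj + s * (2 * v + s * u)) * hu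
    + ((4 - s ^ 2) * v - (2 * v + s * u) - θk + s * θj) * hv

end CommRing

section Field

variable {K : Type*} [Field K] {a b s x y : K}

theorem cramer_solution_spec (hs : 4 - s ^ 2 ≠ 0) (a b : K) :
    2 * ((2 * a - s * b) / (4 - s ^ 2)) + s * ((2 * b - s * a) / (4 - s ^ 2)) = a := by
  field_simp
  ring

theorem eq_cramer_solution (hs : 4 - s ^ 2 ≠ 0) (hx : 2 * x + s * y = a) (hy : 2 * y + s * x = b) :
    x = (2 * a - s * b) / (4 - s ^ 2) :=
  (eq_div_iff hs).mpr (mul_four_sub_sq_of_linear_system hx hy)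

end Field

/-- Solving the linear system `y_j = y_k = 0` for `(x_j, x_k)` when `x_i = s` with
`s² ≠ 4`: the unique solution is `x_j = (2θ_j − sθ_k)/(4 − s²)`,
`x_k = (2θ_k − sθ_j)/(4 − s²)`, and the resulting point lies on `S(θ)` iff `s` is a root
of the quartic `s⁴ − θ_i s³ + (θ₄−4)s² + (4θ_i − θ_jθ_k)s + θ_j² + θ_k² − 4θ₄`. -/
theorem linear_system_solution_and_quartic
    (θi θj θk θ4 s : ℂ) (hs : s ^ 2 ≠ 4) :
    (2 * ((2 * θj - s * θk) / (4 - s ^ 2)) + ((2 * θk - s * θj) / (4 - s ^ 2)) * s - θj = 0 ∧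
     2 * ((2 * θk - s * θj) / (4 - s ^ 2)) + s * ((2 * θj - s * θk) / (4 - s ^ 2)) - θk = 0) ∧
    (∀ xj' xk' : ℂ, 2 * xj' + xk' * s - θj = 0 → 2 * xk' + s * xj' - θk = 0 →
      xj' = (2 * θj - s * θk) / (4 - s ^ 2) ∧ xk' = (2 * θk - s * θj) / (4 - s ^ 2)) ∧
    (s * ((2 * θj - s * θk) / (4 - s ^ 2)) * ((2 * θk - s * θj) / (4 - s ^ 2))
        + s ^ 2 + ((2 * θj - s * θk) / (4 - s ^ 2)) ^ 2 + ((2 * θk - s * θj) / (4 - s ^ 2)) ^ 2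
        - θi * s - θj * ((2 * θj - s * θk) / (4 - s ^ 2))
        - θk * ((2 * θk - s * θj) / (4 - s ^ 2)) + θ4 = 0 ↔
      s ^ 4 - θi * s ^ 3 + (θ4 - 4) * s ^ 2 + (4 * θi - θj * θk) * s
        + θj ^ 2 + θk ^ 2 - 4 * θ4 = 0) := by
  have hdet : (4 : ℂ) - s ^ 2 ≠ 0 := sub_ne_zero.mpr (Ne.symm hs)
  have hj := cramer_solution_spec hdet θj θk
  have hk := cramer_solution_spec hdet θk θj
  refine ⟨⟨by linear_combination hj, by linear_combination hk⟩, ?_, ?_⟩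
  · intro xj xk hxj hxk
    exact ⟨eq_cramer_solution (y := xk) hdet (by linear_combination hxj) (by linear_combination hxk),
      eq_cramer_solution (y := xj) hdet (by linear_combination hxk) (by linear_combination hxj)⟩
  · rw [← mul_left_inj' hdet, zero_mul, critical_value_mul_four_sub_sq hj hk, neg_eq_zero]
end

section
/- Let b = (b₁,b₂,b₃,b₄) with each b_l ∈ ℂ∖{0}, let θ = θ(b), let (i,j,k) be a cyclic permutation of (1,2,3), and let δ ∈ {1,−1}. Then θ_k − δ·θ_j = (b_ib_j)⁻¹·(b_ib₄ − δ)·(b_ib₄⁻¹ − δ)·(b_jb_k − δ)·(b_jb_k⁻¹ − δ). In particular θ_k = δθ_j if and only if b_ib₄^{ε} = δ for some sign ε ∈ {±1} or b_jb_k^{ε} = δ for some sign ε ∈ {±1}. -/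
/-!
With `a = b + b⁻¹` and `δ² = 1`, the difference splits as
`θ_k − δθ_j = (a_i − δa₄)(a_j − δa_k)`, and each factor factors again through
`y + y⁻¹ − δ(x + x⁻¹) = y⁻¹(yx − δ)(yx⁻¹ − δ)`.
-/

section

variable {R : Type*} [CommRing R] {δ : R}

theorem add_sub_mul_add_eq_sub_mul_sub (hδ : δ ^ 2 = 1) (p q r s : R) :
    s * q + p * r - δ * (r * q + s * p) = (p - δ * q) * (r - δ * s) := by
  linear_combination (-(q * s)) * hδ

end

section

variable {K : Type*} [Field K] {δ x y : K}

theorem add_inv_sub_mul_add_inv (hδ : δ ^ 2 = 1) (hx : x ≠ 0) (hy : y ≠ 0) :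
    y + y⁻¹ - δ * (x + x⁻¹) = y⁻¹ * (y * x - δ) * (y * x⁻¹ - δ) := by
  field_simp
  linear_combination (-x) * hδ

theorem inv_mul_sub_mul_sub_eq_zero_iff (hy : y ≠ 0) :
    y⁻¹ * (y * x - δ) * (y * x⁻¹ - δ) = 0 ↔ y * x = δ ∨ y * x⁻¹ = δ := by
  simp [hy, sub_eq_zero]

end

/-- With `θ = θ(b)`, the difference `θ_k − δθ_j` factors as
`(b_ib_j)⁻¹(b_ib₄ − δ)(b_ib₄⁻¹ − δ)(b_jb_k − δ)(b_jb_k⁻¹ − δ)`; in particular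
`θ_k = δθ_j` iff `b_ib₄^ε = δ` or `b_jb_k^ε = δ` for some sign `ε ∈ {±1}`. -/
theorem thetak_minus_delta_thetaj_factorization
    (bi bj bk b4 δ : ℂ) (hbi : bi ≠ 0) (hbj : bj ≠ 0) (hbk : bk ≠ 0) (hb4 : b4 ≠ 0)
    (hδ : δ = 1 ∨ δ = -1) :
    (fun ai aj ak a4 =>
      (fun θj θk =>
        θk - δ * θj =
          (bi * bj)⁻¹ * (bi * b4 - δ) * (bi * b4⁻¹ - δ) * (bj * bk - δ) * (bj * bk⁻¹ - δ) ∧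
        (θk = δ * θj ↔
          ((bi * b4 = δ ∨ bi * b4⁻¹ = δ) ∨ (bj * bk = δ ∨ bj * bk⁻¹ = δ))))
      (aj * a4 + ak * ai) (ak * a4 + ai * aj))
    (bi + bi⁻¹) (bj + bj⁻¹) (bk + bk⁻¹) (b4 + b4⁻¹) := by
  beta_reduce
  have hδ2 : δ ^ 2 = 1 := sq_eq_one_iff.mpr hδ
  have hsplit := add_sub_mul_add_eq_sub_mul_sub hδ2 (bi + bi⁻¹) (b4 + b4⁻¹) (bj + bj⁻¹) (bk + bk⁻¹)
  rw [add_inv_sub_mul_add_inv hδ2 hb4 hbi, add_inv_sub_mul_add_inv hδ2 hbk hbj] at hsplit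
  refine ⟨by rw [hsplit, mul_inv]; ring, ?_⟩
  rw [← sub_eq_zero, hsplit, mul_eq_zero, inv_mul_sub_mul_sub_eq_zero_iff hbi,
    inv_mul_sub_mul_sub_eq_zero_iff hbj]
end

section
/- Let θ ∈ ℂ⁴, let (i,j,k) be a cyclic permutation of (1,2,3), and let δ ∈ {1,−1}. (a) If x ∈ ℂ³ satisfies x_i = 2δ, y_j(x,θ) = 0 and y_k(x,θ) = 0, then θ_k = δθ_j and x_j + δx_k = θ_j/2; conversely, if θ_k = δθ_j, then every x ∈ ℂ³ with x_i = 2δ and x_j + δx_k = θ_j/2 satisfies y_j(x,θ) = 0 and y_k(x,θ) = 0. (b) Assume θ_k = δθ_j and let ℓ_j^δ = {x ∈ ℂ³ : x_i = 2δ, x_j + δx_k = θ_j/2}. Then ℓ_j^δ ⊆ S(θ) (equivalently, ℓ_j^δ is contained in the fixed-point set of g_j²) if and only if s = 2δ is a multiple root of the quartic Q(s), i.e. Q(2δ) = 0 and Q′(2δ) = 0. -/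
/-! On the plane `x_i = 2δ` the equations `y_j = y_k = 0` are linear, and since `δ² = 1` they
amount to `θ_k = δθ_j` together with the line `x_j + δx_k = θ_j/2`. Along that line
`(x_j + δx_k)² = θ_j²/4`, so `f` is constant there, equal to `δ Q'(2δ)/4`; moreover `Q(2δ)`
vanishes identically once `θ_k = δθ_j`. Hence the line lies in `S(θ)` exactly when
`Q'(2δ) = 0`, i.e. when `2δ` is a multiple root of `Q`. -/

/-- The quartic polynomial attached to `θ` and the cyclic permutation `(i,j,k)`. -/
noncomputable def quartic (θi θj θk θ4 : ℂ) : ℂ → ℂ :=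
  fun s => s ^ 4 - θi * s ^ 3 + (θ4 - 4) * s ^ 2 + (4 * θi - θj * θk) * s
    + θj ^ 2 + θk ^ 2 - 4 * θ4

section

variable {θi θj θk θ4 δ : ℂ}

lemma quartic_hasDerivAt (θi θj θk θ4 s : ℂ) :
    HasDerivAt (quartic θi θj θk θ4)
      (4 * s ^ 3 - 3 * θi * s ^ 2 + 2 * (θ4 - 4) * s + (4 * θi - θj * θk)) s := by
  have h := ((((((hasDerivAt_pow 4 s).sub ((hasDerivAt_pow 3 s).const_mul θi)).add
      ((hasDerivAt_pow 2 s).const_mul (θ4 - 4))).add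
      ((hasDerivAt_id s).const_mul (4 * θi - θj * θk))).add_const (θj ^ 2)).add_const
      (θk ^ 2)).sub_const (4 * θ4)
  refine h.congr_deriv ?_
  ring

lemma deriv_quartic (θi θj θk θ4 s : ℂ) :
    deriv (quartic θi θj θk θ4) s
      = 4 * s ^ 3 - 3 * θi * s ^ 2 + 2 * (θ4 - 4) * s + (4 * θi - θj * θk) :=
  (quartic_hasDerivAt θi θj θk θ4 s).deriv

lemma quartic_two_mul_eq_zero (hδ : δ ^ 2 = 1) (hk : θk = δ * θj) :
    quartic θi θj θk θ4 (2 * δ) = 0 := by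
  subst hk
  simp only [quartic]
  linear_combination (16 * δ ^ 2 - 8 * δ * θi + 4 * θ4 - θj ^ 2) * hδ

lemma eq_mul_and_mem_line_of_critical (hδ : δ ^ 2 = 1) {xj xk : ℂ}
    (hyj : 2 * xj + xk * (2 * δ) - θj = 0) (hyk : 2 * xk + (2 * δ) * xj - θk = 0) :
    θk = δ * θj ∧ xj + δ * xk = θj / 2 :=
  ⟨by linear_combination δ * hyj - hyk - 2 * xk * hδ, by linear_combination hyj / 2⟩

lemma critical_of_mem_line (hδ : δ ^ 2 = 1) (hk : θk = δ * θj) {xj xk : ℂ}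
    (hline : xj + δ * xk = θj / 2) :
    2 * xj + xk * (2 * δ) - θj = 0 ∧ 2 * xk + (2 * δ) * xj - θk = 0 :=
  ⟨by linear_combination 2 * hline, by linear_combination 2 * δ * hline - hk - 2 * xk * hδ⟩

lemma surface_eq_deriv_quartic_of_mem_line (hδ : δ ^ 2 = 1) (hk : θk = δ * θj) {xj xk : ℂ}
    (hline : xj + δ * xk = θj / 2) :
    (2 * δ) * xj * xk + (2 * δ) ^ 2 + xj ^ 2 + xk ^ 2 - θi * (2 * δ) - θj * xj - θk * xk + θ4
      = δ * deriv (quartic θi θj θk θ4) (2 * δ) / 4 := by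
  rw [deriv_quartic]
  subst hk
  linear_combination (xj + δ * xk - θj / 2) * hline
    + (3 * δ * θi - 8 * δ ^ 2 - xk ^ 2 + θj ^ 2 / 4 - θ4) * hδ

end

/-- (a) Points with `x_i = 2δ` and `y_j = y_k = 0` satisfy `θ_k = δθ_j` and lie on the
line `x_j + δx_k = θ_j/2`, and conversely if `θ_k = δθ_j` every point of that line with
`x_i = 2δ` satisfies `y_j = y_k = 0`.
(b) Assuming `θ_k = δθ_j`, the line `ℓ_j^δ` is contained in `S(θ)` if and only if
`s = 2δ` is a multiple root of the quartic. -/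
theorem line_component_criterion
    (θi θj θk θ4 δ : ℂ) (hδ : δ = 1 ∨ δ = -1) :
    (∀ xj xk : ℂ,
        2 * xj + xk * (2 * δ) - θj = 0 → 2 * xk + (2 * δ) * xj - θk = 0 →
        θk = δ * θj ∧ xj + δ * xk = θj / 2) ∧
    (θk = δ * θj → ∀ xj xk : ℂ, xj + δ * xk = θj / 2 →
        2 * xj + xk * (2 * δ) - θj = 0 ∧ 2 * xk + (2 * δ) * xj - θk = 0) ∧
    (θk = δ * θj →
      ((∀ xj xk : ℂ, xj + δ * xk = θj / 2 →
          (2 * δ) * xj * xk + (2 * δ) ^ 2 + xj ^ 2 + xk ^ 2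
            - θi * (2 * δ) - θj * xj - θk * xk + θ4 = 0) ↔
        (quartic θi θj θk θ4 (2 * δ) = 0 ∧ deriv (quartic θi θj θk θ4) (2 * δ) = 0))) := by
  have hδ2 : δ ^ 2 = 1 := sq_eq_one_iff.mpr hδ
  have hδ0 : δ ≠ 0 := by rintro rfl; norm_num at hδ2
  refine ⟨fun _ _ => eq_mul_and_mem_line_of_critical hδ2,
    fun hk _ _ => critical_of_mem_line hδ2 hk, fun hk => ?_⟩
  rw [and_iff_right (quartic_two_mul_eq_zero hδ2 hk)]
  have hconst {xj xk : ℂ} (hline : xj + δ * xk = θj / 2) :=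
    surface_eq_deriv_quartic_of_mem_line (θi := θi) (θ4 := θ4) hδ2 hk hline
  constructor
  · intro hsurf
    have hpt : 0 + δ * (δ * θj / 2) = θj / 2 := by linear_combination θj / 2 * hδ2
    simpa [hδ0] using (hconst hpt).symm.trans (hsurf _ _ hpt)
  · intro hderiv xj xk hline
    rw [hconst hline, hderiv, mul_zero, zero_div]
end

section
/- Let (i,j,k) be a cyclic permutation of (1,2,3). (a) If θ ∈ ℂ⁴ has θ₁ = θ₂ = θ₃ = 0 and θ₄ = −4, then the fixed-point set of g_j² on S(θ), namely {x ∈ ℂ³ : f(x,θ) = 0, y_j(x,θ) = 0, y_k(x,θ) = 0}, equals the disjoint union of the two lines ℓ_j⁺ = {x : x_i = 2, x_j + x_k = 0} and ℓ_j⁻ = {x : x_i = −2, x_j − x_k = 0}. (b) For arbitrary θ ∈ ℂ⁴, the quartic Q(s) has a multiple root at s = 2 and a multiple root at s = −2 (i.e. Q(2) = Q′(2) = Q(−2) = Q′(−2) = 0) if and only if θ_i = θ_j = θ_k = 0 and θ₄ = −4. -/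
section FixedLines

variable {K : Type*} [Field K]

theorem ne_neg_of_eq_two {a : K} (h2 : (2 : K) ≠ 0) (ha : a = 2) : a ≠ -2 := by
  rintro rfl
  exact h2 (mul_self_eq_zero.mp (by linear_combination -ha))

theorem fixed_eqs_iff_mem_lines (h2 : (2 : K) ≠ 0) (xi xj xk : K) :
    (xi * xj * xk + xi ^ 2 + xj ^ 2 + xk ^ 2 + (-4 : K) = 0 ∧
        2 * xj + xk * xi = 0 ∧ 2 * xk + xi * xj = 0) ↔
      (xi = 2 ∧ xj + xk = 0) ∨ (xi = -2 ∧ xj - xk = 0) := by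
  constructor
  · rintro ⟨hf, hj, hk⟩
    have hsum : (xj + xk) * (xi + 2) = 0 := by linear_combination hj + hk
    have hdiff : (xj - xk) * (xi - 2) = 0 := by linear_combination hk - hj
    rcases mul_eq_zero.mp hsum with hsum | hxi
    · rcases mul_eq_zero.mp hdiff with hdiff | hxi
      · have hxj : xj = 0 := (mul_eq_zero_iff_left h2).mp (by linear_combination hsum + hdiff)
        have hxk : xk = 0 := (mul_eq_zero_iff_left h2).mp (by linear_combination hsum - hdiff)
        have hsq : (xi - 2) * (xi + 2) = 0 := by
          linear_combination hf - (xi * xk + xj) * hxj - xk * hxk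
        rcases mul_eq_zero.mp hsq with hxi | hxi
        · exact .inl ⟨by linear_combination hxi, hsum⟩
        · exact .inr ⟨by linear_combination hxi, hdiff⟩
      · exact .inl ⟨by linear_combination hxi, hsum⟩
    · refine .inr ⟨by linear_combination hxi, ?_⟩
      refine (mul_eq_zero_iff_left h2).mp ((mul_eq_zero_iff_left h2).mp ?_)
      linear_combination (xj - xk) * hxi - hdiff
  · rintro (⟨rfl, hjk⟩ | ⟨rfl, hjk⟩)
    · exact ⟨by linear_combination (xj + xk) * hjk, by linear_combination 2 * hjk,
        by linear_combination 2 * hjk⟩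
    · exact ⟨by linear_combination (xj - xk) * hjk, by linear_combination 2 * hjk,
        by linear_combination -2 * hjk⟩

end FixedLines

section Quartic

variable (θi θj θk θ4 : ℂ)

theorem hasDerivAt_quartic (s : ℂ) :
    HasDerivAt (quartic θi θj θk θ4)
      (4 * s ^ 3 - 3 * θi * s ^ 2 + 2 * (θ4 - 4) * s + (4 * θi - θj * θk)) s := by
  have hs := hasDerivAt_id' s
  refine (((((((hs.pow 4).sub ((hs.pow 3).const_mul θi)).add
    ((hs.pow 2).const_mul (θ4 - 4))).add (hs.const_mul (4 * θi - θj * θk))).add_const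
    (θj ^ 2)).add_const (θk ^ 2)).sub_const (4 * θ4)).congr_deriv ?_
  norm_num
  ring

theorem quartic_two : quartic θi θj θk θ4 2 = (θj - θk) ^ 2 := by
  simp only [quartic]; ring

theorem quartic_neg_two : quartic θi θj θk θ4 (-2) = (θj + θk) ^ 2 := by
  simp only [quartic]; ring

theorem deriv_quartic_two :
    deriv (quartic θi θj θk θ4) 2 = 16 - 8 * θi + 4 * θ4 - θj * θk := by
  rw [(hasDerivAt_quartic θi θj θk θ4 2).deriv]; ring

theorem deriv_quartic_neg_two :
    deriv (quartic θi θj θk θ4) (-2) = -16 - 8 * θi - 4 * θ4 - θj * θk := by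
  rw [(hasDerivAt_quartic θi θj θk θ4 (-2)).deriv]; ring

theorem quartic_double_roots_iff :
    (quartic θi θj θk θ4 2 = 0 ∧ deriv (quartic θi θj θk θ4) 2 = 0 ∧
        quartic θi θj θk θ4 (-2) = 0 ∧ deriv (quartic θi θj θk θ4) (-2) = 0) ↔
      (θi = 0 ∧ θj = 0 ∧ θk = 0 ∧ θ4 = -4) := by
  rw [quartic_two, quartic_neg_two, deriv_quartic_two, deriv_quartic_neg_two]
  constructor
  · rintro ⟨hdiff, hd2, hsum, hdm2⟩
    have hdiff := pow_eq_zero_iff two_ne_zero |>.mp hdiff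
    have hsum := pow_eq_zero_iff two_ne_zero |>.mp hsum
    have hj : θj = 0 := by linear_combination (hsum + hdiff) / 2
    have hk : θk = 0 := by linear_combination (hsum - hdiff) / 2
    exact ⟨by linear_combination (-hd2 - hdm2) / 16 - θk / 8 * hj, hj, hk,
      by linear_combination (hd2 - hdm2) / 8⟩
  · rintro ⟨rfl, rfl, rfl, rfl⟩
    norm_num

end Quartic

/-- (a) For `θ = (0,0,0,−4)` the fixed-point set of `g_j²` on `S(θ)` is the disjoint
union of the two lines `ℓ_j⁺ = {x_i = 2, x_j + x_k = 0}` and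
`ℓ_j⁻ = {x_i = −2, x_j − x_k = 0}`.
(b) For arbitrary `θ`, the quartic has multiple roots at both `s = 2` and `s = −2`
if and only if `θ_i = θ_j = θ_k = 0` and `θ₄ = −4`. -/
theorem fixed_point_set_A1_four_and_multiple_roots :
    (∀ xi xj xk : ℂ,
      ((xi * xj * xk + xi ^ 2 + xj ^ 2 + xk ^ 2 + (-4 : ℂ) = 0 ∧
        2 * xj + xk * xi = 0 ∧ 2 * xk + xi * xj = 0) ↔
        ((xi = 2 ∧ xj + xk = 0) ∨ (xi = -2 ∧ xj - xk = 0))) ∧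
      ¬((xi = 2 ∧ xj + xk = 0) ∧ (xi = -2 ∧ xj - xk = 0))) ∧
    (∀ θi θj θk θ4 : ℂ,
      (quartic θi θj θk θ4 2 = 0 ∧ deriv (quartic θi θj θk θ4) 2 = 0 ∧
       quartic θi θj θk θ4 (-2) = 0 ∧ deriv (quartic θi θj θk θ4) (-2) = 0) ↔
      (θi = 0 ∧ θj = 0 ∧ θk = 0 ∧ θ4 = -4)) :=
  ⟨fun xi xj xk => ⟨fixed_eqs_iff_mem_lines two_ne_zero xi xj xk,
      fun ⟨⟨h, _⟩, ⟨h', _⟩⟩ => ne_neg_of_eq_two two_ne_zero h h'⟩,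
    quartic_double_roots_iff⟩
end
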